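/- arXiv:2004.10839 — 11 statements merged into one kernel-verified Lean document; each statement's English description precedes it below -/
import Mathlib

section
/- Let f, g, h ∈ ℤ[X] and let (a_n)_{n∈ℕ} = a(f,g,h). If there exist integers b, c such that a_n = c·b^n for all sufficiently large n, then either h is the constant polynomial b, or the product polynomial g·h is the zero polynomial. -/
open Polynomial Filter Asymptotics

/-- The sequence a(f,g,h): a₀ = g(0), aₙ = f(n)·aₙ₋₁ + g(n)·h(n)ⁿ for n ≥ 1. -/
def seqA (f g h : Polynomial ℤ) : ℕ → ℤ
  | 0 => g.eval 0
  | n + 1 => f.eval ((n : ℤ) + 1) * seqA f g h n +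
      g.eval ((n : ℤ) + 1) * (h.eval ((n : ℤ) + 1)) ^ (n + 1)

lemma aux_zero_of_eval (p : Polynomial ℤ) (s : ℕ → ℤ) (hs : Function.Injective s) (N : ℕ)
    (h : ∀ n, N ≤ n → p.eval (s n) = 0) : p = 0 := by
  apply Polynomial.eq_zero_of_infinite_isRoot
  have h1 : s '' Set.Ici N ⊆ {x | p.IsRoot x} := by
    rintro x ⟨n, hn, rfl⟩
    exact h n hn
  exact Set.Infinite.mono h1 ((Set.Ici_infinite N).image (hs.injOn))

lemma aux_ev_ne (p : Polynomial ℤ) (hp : p ≠ 0) :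
    ∀ᶠ n : ℕ in atTop, p.eval ((n : ℤ) + 1) ≠ 0 := by
  by_contra hcon
  rw [Filter.not_eventually] at hcon
  simp only [not_not] at hcon
  have hinf := Nat.frequently_atTop_iff_infinite.mp hcon
  apply hp
  apply Polynomial.eq_zero_of_infinite_isRoot
  have hsub : (fun n : ℕ => (n : ℤ) + 1) '' {n | p.eval ((n : ℤ) + 1) = 0} ⊆ {x | p.IsRoot x} := by
    rintro x ⟨n, hn, rfl⟩
    exact hn
  refine Set.Infinite.mono hsub (hinf.image ?_)
  exact Function.Injective.injOn (fun a b hab => by simpa using hab)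

lemma aux_ev_abs_ge (p : Polynomial ℤ) (hd : 0 < p.natDegree) (M : ℤ) :
    ∀ᶠ n : ℕ in atTop, M ≤ |p.eval ((n : ℤ) + 1)| := by
  set P : Polynomial ℝ := p.map (Int.castRingHom ℝ) with hP
  have hdeg : 0 < P.degree := by
    rw [hP, degree_map_eq_of_injective (f := Int.castRingHom ℝ) (fun a b hab => by simpa using hab)]
    exact natDegree_pos_iff_degree_pos.mp hd
  have ht := P.abs_tendsto_atTop hdeg
  have ht2 : Filter.Tendsto (fun n : ℕ => ((n : ℝ) + 1)) atTop atTop :=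
    tendsto_atTop_add_const_right _ 1 tendsto_natCast_atTop_atTop
  have ht3 := (ht.comp ht2).eventually_ge_atTop (M : ℝ)
  filter_upwards [ht3] with n hn
  have heq : |P.eval ((n : ℝ) + 1)| = ((|p.eval ((n : ℤ) + 1)| : ℤ) : ℝ) := by
    have : ((n : ℝ) + 1) = (((n : ℤ) + 1 : ℤ) : ℝ) := by push_cast; ring
    rw [this, hP, Polynomial.eval_intCast_map]
    simp [Int.cast_abs]
  rw [Function.comp] at hn
  rw [heq] at hn
  exact_mod_cast hn

lemma aux_asym (p : Polynomial ℤ) (A B : ℤ) (hA : 1 ≤ A) (hAB : A < B)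
    (H : ∀ᶠ n : ℕ in atTop, B ^ n ≤ A ^ n * |p.eval ((n : ℤ) + 1)|) : False := by
  set q : Polynomial ℝ := (p.comp (X + 1)).map (Int.castRingHom ℝ) with hq
  have hA0 : (0 : ℝ) < (A : ℝ) := by exact_mod_cast lt_of_lt_of_le zero_lt_one hA
  have hr : (1 : ℝ) < (B : ℝ) / (A : ℝ) := by
    rw [lt_div_iff₀ hA0]
    exact_mod_cast by linarith
  have hqn : ∀ n : ℕ, q.eval ((n : ℝ)) = ((p.eval ((n : ℤ) + 1) : ℤ) : ℝ) := by
    intro n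
    have h1 : ((n : ℕ) : ℝ) = (((n : ℕ) : ℤ) : ℝ) := by push_cast; ring
    rw [h1, hq, Polynomial.eval_intCast_map, Polynomial.eval_comp]
    push_cast
    simp
  have h1 : (fun x : ℝ => q.eval x) =O[atTop] fun x : ℝ => x ^ q.natDegree :=
    q.isEquivalent_atTop_lead.isBigO.trans ((isBigO_refl (fun x : ℝ => x ^ q.natDegree) atTop).const_mul_left _)
  have h2 : (fun n : ℕ => q.eval (n : ℝ)) =O[atTop] fun n : ℕ => ((n : ℝ)) ^ q.natDegree :=
    h1.comp_tendsto tendsto_natCast_atTop_atTop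
  have h3 := h2.trans_isLittleO
    (isLittleO_pow_const_const_pow_of_one_lt q.natDegree hr)
  have h4 := h3.def (by norm_num : (0 : ℝ) < 1/2)
  obtain ⟨n, hle, hb⟩ := (H.and h4).exists
  have hrpos : (0 : ℝ) < (B : ℝ) / (A : ℝ) := lt_trans zero_lt_one hr
  have key : ((B : ℝ) / (A : ℝ)) ^ n ≤ |q.eval (n : ℝ)| := by
    rw [div_pow, div_le_iff₀ (pow_pos hA0 n), hqn]
    have := hle
    have hcast : ((B : ℝ)) ^ n ≤ ((A : ℝ)) ^ n * ((|p.eval ((n : ℤ) + 1)| : ℤ) : ℝ) := by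
      exact_mod_cast hle
    push_cast at hcast ⊢
    rw [mul_comm] at hcast
    exact hcast
  rw [Real.norm_eq_abs, Real.norm_eq_abs, abs_pow, abs_div] at hb
  have hAB' : |((B : ℝ))| / |((A : ℝ))| = (B : ℝ) / (A : ℝ) := by
    rw [abs_of_pos (lt_trans hA0 (by exact_mod_cast hAB)), abs_of_pos hA0]
  rw [hAB'] at hb
  have hpow : (0 : ℝ) < ((B : ℝ) / (A : ℝ)) ^ n := pow_pos hrpos n
  linarith [key.trans hb]

theorem stmt_0 (f g h : Polynomial ℤ) (b c : ℤ)
    (hev : ∃ N : ℕ, ∀ n : ℕ, N ≤ n → seqA f g h n = c * b ^ n) :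
    h = Polynomial.C b ∨ g * h = 0 := by
  by_cases hhb : h = Polynomial.C b
  · exact Or.inl hhb
  by_cases hgh : g * h = 0
  · exact Or.inr hgh
  exfalso
  obtain ⟨N, hN⟩ := hev
  have hg : g ≠ 0 := left_ne_zero_of_mul hgh
  have hh : h ≠ 0 := right_ne_zero_of_mul hgh
  -- the key recurrence consequence
  have key : ∀ n : ℕ, N ≤ n →
      g.eval ((n : ℤ) + 1) * (h.eval ((n : ℤ) + 1)) ^ (n + 1)
        = c * b ^ n * (b - f.eval ((n : ℤ) + 1)) := by
    intro n hn
    have h1 := hN (n + 1) (le_trans hn (Nat.le_succ n))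
    have h2 := hN n hn
    have h3 : seqA f g h (n + 1) = f.eval ((n : ℤ) + 1) * seqA f g h n +
        g.eval ((n : ℤ) + 1) * (h.eval ((n : ℤ) + 1)) ^ (n + 1) := rfl
    rw [h3, h2] at h1
    linear_combination h1
  have Ekey : ∀ᶠ n : ℕ in atTop,
      g.eval ((n : ℤ) + 1) * (h.eval ((n : ℤ) + 1)) ^ (n + 1)
        = c * b ^ n * (b - f.eval ((n : ℤ) + 1)) :=
    Filter.eventually_atTop.mpr ⟨N, key⟩
  have Eg := aux_ev_ne g hg
  have Eh := aux_ev_ne h hh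
  -- b ≠ 0 and c ≠ 0
  obtain ⟨n₀, hn₀1, hn₀eq, hn₀g, hn₀h⟩ :=
    ((Filter.eventually_ge_atTop 1).and (Ekey.and (Eg.and Eh))).exists
  have hrhs : c * b ^ n₀ * (b - f.eval ((n₀ : ℤ) + 1)) ≠ 0 := by
    rw [← hn₀eq]
    exact mul_ne_zero hn₀g (pow_ne_zero _ hn₀h)
  have hc : c ≠ 0 := fun hc0 => hrhs (by rw [hc0]; ring)
  have hb : b ≠ 0 := by
    intro hb0
    apply hrhs
    rw [hb0, zero_pow (by omega : n₀ ≠ 0)]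
    ring
  have Ebf : ∀ᶠ n : ℕ in atTop, b - f.eval ((n : ℤ) + 1) ≠ 0 := by
    filter_upwards [Ekey, Eg, Eh] with n heq hgne hhne
    intro hbf
    have : g.eval ((n : ℤ) + 1) * (h.eval ((n : ℤ) + 1)) ^ (n + 1) = 0 := by
      rw [heq, hbf]; ring
    exact (mul_ne_zero hgne (pow_ne_zero _ hhne)) this
  -- main "large h" path
  have bigpath : (∀ᶠ n : ℕ in atTop, |b| + 1 ≤ |h.eval ((n : ℤ) + 1)|) → False := by
    intro Ehge
    apply aux_asym (Polynomial.C c * (Polynomial.C b - f)) |b| (|b| + 1)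
      (Int.one_le_abs hb) (by omega)
    filter_upwards [Ekey, Eg, Ehge] with n heq hgne hhge
    have e1 : (|b| + 1) ^ n ≤ (|b| + 1) ^ (n + 1) :=
      pow_le_pow_right₀ (by have := abs_nonneg b; omega) (Nat.le_succ n)
    have e2 : (|b| + 1) ^ (n + 1) ≤ |h.eval ((n : ℤ) + 1)| ^ (n + 1) :=
      pow_le_pow_left₀ (by positivity) hhge _
    have e3 : (1 : ℤ) ≤ |g.eval ((n : ℤ) + 1)| := Int.one_le_abs hgne
    have e4 : |h.eval ((n : ℤ) + 1)| ^ (n + 1)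
        ≤ |g.eval ((n : ℤ) + 1)| * |h.eval ((n : ℤ) + 1)| ^ (n + 1) := by
      nlinarith [pow_nonneg (abs_nonneg (h.eval ((n : ℤ) + 1))) (n + 1)]
    have e5 : |g.eval ((n : ℤ) + 1)| * |h.eval ((n : ℤ) + 1)| ^ (n + 1)
        = |b| ^ n * |(Polynomial.C c * (Polynomial.C b - f)).eval ((n : ℤ) + 1)| := by
      rw [← abs_pow, ← abs_mul, heq]
      simp only [Polynomial.eval_mul, Polynomial.eval_sub, Polynomial.eval_C]
      rw [abs_mul, abs_mul, abs_mul, abs_pow]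
      ring
    linarith
  by_cases hd0 : h.natDegree = 0
  · -- h is a constant d
    set d : ℤ := h.coeff 0 with hd
    have hC : h = Polynomial.C d := Polynomial.eq_C_of_natDegree_eq_zero hd0
    have hdne : d ≠ 0 := fun h0 => hh (by rw [hC, h0, map_zero])
    have hdb : d ≠ b := fun h0 => hhb (by rw [hC, h0])
    have hevald : ∀ x : ℤ, h.eval x = d := fun x => by rw [hC, Polynomial.eval_C]
    rcases lt_trichotomy |d| |b| with hlt | heqq | hgt
    · -- |d| < |b|
      apply aux_asym (Polynomial.C d * g) |d| |b| (Int.one_le_abs hdne) hlt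
      filter_upwards [Ekey, Ebf] with n heq hbf
      rw [hevald] at heq
      have e1 : (1 : ℤ) ≤ |c| * |b - f.eval ((n : ℤ) + 1)| := by
        have := Int.one_le_abs hc
        have := Int.one_le_abs hbf
        nlinarith
      have e2 : |b| ^ n ≤ |b| ^ n * (|c| * |b - f.eval ((n : ℤ) + 1)|) :=
        le_mul_of_one_le_right (by positivity) e1
      have e3 : |b| ^ n * (|c| * |b - f.eval ((n : ℤ) + 1)|)
          = |d| ^ n * |(Polynomial.C d * g).eval ((n : ℤ) + 1)| := by
        have : |b| ^ n * (|c| * |b - f.eval ((n : ℤ) + 1)|)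
            = |c * b ^ n * (b - f.eval ((n : ℤ) + 1))| := by
          rw [abs_mul, abs_mul, abs_pow]; ring
        rw [this, ← heq]
        simp only [Polynomial.eval_mul, Polynomial.eval_C]
        rw [abs_mul, abs_pow, abs_mul, pow_succ]
        ring
      linarith
    · -- |d| = |b|, so d = -b, parity argument
      have hdnb : d = -b := by
        rcases abs_eq_abs.mp heqq with h1 | h1
        · exact absurd h1 hdb
        · exact h1
      have sign : ∀ n : ℕ, N ≤ n →
          (-1 : ℤ) ^ (n + 1) * (b * g.eval ((n : ℤ) + 1))
            = c * (b - f.eval ((n : ℤ) + 1)) := by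
        intro n hn
        have hkn := key n hn
        rw [hevald, hdnb] at hkn
        apply mul_left_cancel₀ (pow_ne_zero n hb)
        calc b ^ n * ((-1 : ℤ) ^ (n + 1) * (b * g.eval ((n : ℤ) + 1)))
            = g.eval ((n : ℤ) + 1) * (-b) ^ (n + 1) := by
              rw [neg_pow]; ring
          _ = c * b ^ n * (b - f.eval ((n : ℤ) + 1)) := hkn
          _ = b ^ n * (c * (b - f.eval ((n : ℤ) + 1))) := by ring
      set P : Polynomial ℤ := Polynomial.C b * g - Polynomial.C c * (Polynomial.C b - f) with hPdef
      set Q : Polynomial ℤ := Polynomial.C b * g + Polynomial.C c * (Polynomial.C b - f) with hQdef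
      have hP0 : P = 0 := by
        apply aux_zero_of_eval P (fun m => 2 * (m : ℤ) + 2) (fun a b hab => by simp only at hab; omega) N
        intro m hm
        have hs := sign (2 * m + 1) (by omega)
        have hx : ((2 * m + 1 : ℕ) : ℤ) + 1 = 2 * (m : ℤ) + 2 := by push_cast; ring
        rw [hx] at hs
        have hpow : (-1 : ℤ) ^ (2 * m + 1 + 1) = 1 := Even.neg_one_pow ⟨m + 1, by ring⟩
        rw [hpow, one_mul] at hs
        simp only [hPdef, Polynomial.eval_sub, Polynomial.eval_mul, Polynomial.eval_C]
        linear_combination hs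
      have hQ0 : Q = 0 := by
        apply aux_zero_of_eval Q (fun m => 2 * (m : ℤ) + 1) (fun a b hab => by simp only at hab; omega) N
        intro m hm
        have hs := sign (2 * m) (by omega)
        have hx : ((2 * m : ℕ) : ℤ) + 1 = 2 * (m : ℤ) + 1 := by push_cast; ring
        rw [hx] at hs
        have hpow : (-1 : ℤ) ^ (2 * m + 1) = -1 := Odd.neg_one_pow ⟨m, by ring⟩
        rw [hpow] at hs
        simp only [hQdef, Polynomial.eval_add, Polynomial.eval_mul, Polynomial.eval_sub,
          Polynomial.eval_C]
        linear_combination -hs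
      have h2bg : (2 : Polynomial ℤ) * (Polynomial.C b * g) = 0 := by
        have := hP0
        have := hQ0
        rw [hPdef] at hP0
        rw [hQdef] at hQ0
        linear_combination hP0 + hQ0
      rcases mul_eq_zero.mp h2bg with h1 | h1
      · exact two_ne_zero h1
      · rcases mul_eq_zero.mp h1 with h2 | h2
        · exact hb (by simpa using h2)
        · exact hg h2
    · -- |b| < |d|
      apply bigpath
      apply Filter.Eventually.of_forall
      intro n
      rw [hevald]
      omega
  · -- deg h ≥ 1
    exact bigpath (aux_ev_abs_ge h (Nat.pos_of_ne_zero hd0) (|b| + 1))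
end

section
/- Let f, g, h ∈ ℤ[X] with g ≢ 0 and h ≢ 0, let (a_n)_{n∈ℕ} = a(f,g,h), and let b, c be integers with c ≠ 0 such that a_n = c·b^n for all sufficiently large n. Then h is a constant polynomial and |h| ≤ |b|. -/
open Polynomial

lemma infRoots (p : Polynomial ℤ) (hp : ∀ n : ℕ, ∃ m : ℕ, n ≤ m ∧ p.eval (m : ℤ) = 0) :
    p = 0 := by
  apply Polynomial.eq_zero_of_infinite_isRoot
  by_contra hfin
  rw [Set.not_infinite] at hfin
  obtain ⟨u, hu⟩ := hfin.bddAbove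
  obtain ⟨m, hm, hroot⟩ := hp (u.toNat + 1)
  have : (m : ℤ) ≤ u := hu hroot
  have h2 : u ≤ u.toNat := Int.self_le_toNat u
  have : ((u.toNat + 1 : ℕ) : ℤ) ≤ (m : ℤ) := by exact_mod_cast hm
  push_cast at this
  omega

lemma evNonzero (p : Polynomial ℤ) (hp : p ≠ 0) :
    ∃ M : ℕ, ∀ m : ℕ, M ≤ m → p.eval (m : ℤ) ≠ 0 := by
  by_contra hcon
  push_neg at hcon
  exact hp (infRoots p hcon)

lemma polyBound (p : Polynomial ℤ) : ∃ C : ℤ, 0 ≤ C ∧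
    ∀ m : ℕ, 1 ≤ m → |p.eval (m : ℤ)| ≤ C * (m : ℤ) ^ p.natDegree := by
  refine ⟨∑ i ∈ Finset.range (p.natDegree + 1), |p.coeff i|, Finset.sum_nonneg fun i _ => abs_nonneg _, ?_⟩
  intro m hm
  have h1 : (1 : ℤ) ≤ (m : ℤ) := by exact_mod_cast hm
  rw [Polynomial.eval_eq_sum_range]
  calc |∑ i ∈ Finset.range (p.natDegree + 1), p.coeff i * (m : ℤ) ^ i|
      ≤ ∑ i ∈ Finset.range (p.natDegree + 1), |p.coeff i * (m : ℤ) ^ i| :=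
        Finset.abs_sum_le_sum_abs _ _
    _ ≤ ∑ i ∈ Finset.range (p.natDegree + 1), |p.coeff i| * (m : ℤ) ^ p.natDegree := by
        apply Finset.sum_le_sum
        intro i hi
        rw [abs_mul, abs_pow, abs_of_nonneg (by linarith : (0:ℤ) ≤ (m:ℤ))]
        exact mul_le_mul_of_nonneg_left
          (pow_le_pow_right₀ h1 (Nat.lt_succ_iff.mp (Finset.mem_range.mp hi)))
          (abs_nonneg _)
    _ = _ := by rw [Finset.sum_mul]

lemma expBeats (C : ℝ) (B : ℝ) (hB : 1 ≤ B) (d : ℕ) :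
    ∃ M : ℕ, ∀ m : ℕ, M ≤ m → C * (m : ℝ) ^ d * B ^ m < (B + 1) ^ m := by
  have hB0 : 0 < B := by linarith
  have hB1 : 0 < B + 1 := by linarith
  have hr : |B / (B + 1)| < 1 := by
    rw [abs_of_pos (div_pos hB0 hB1)]
    rw [div_lt_one hB1]; linarith
  have ht := tendsto_pow_const_mul_const_pow_of_abs_lt_one d hr
  have := ht.eventually (gt_mem_nhds (show (0:ℝ) < 1 / (|C| + 1) by positivity))
  rw [Filter.eventually_atTop] at this
  obtain ⟨M, hM⟩ := this
  refine ⟨M, fun m hm => ?_⟩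
  have h1 := hM m hm
  have key : C * (m:ℝ)^d * (B / (B+1))^m < 1 := by
    calc C * (m:ℝ)^d * (B/(B+1))^m ≤ |C| * ((m:ℝ)^d * (B/(B+1))^m) := by
          rw [← mul_assoc]
          apply mul_le_mul_of_nonneg_right (mul_le_mul_of_nonneg_right (le_abs_self C) (by positivity))
          positivity
      _ ≤ (|C| + 1) * ((m:ℝ)^d * (B/(B+1))^m) := by
          apply mul_le_mul_of_nonneg_right (by linarith) (by positivity)
      _ < (|C| + 1) * (1 / (|C| + 1)) := mul_lt_mul_of_pos_left h1 (by positivity)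
      _ = 1 := mul_one_div_cancel (by positivity)
  have hpow : (B/(B+1))^m * (B+1)^m = B^m := by
    rw [div_pow, div_mul_cancel₀]
    positivity
  calc C * (m:ℝ)^d * B^m = (C * (m:ℝ)^d * (B/(B+1))^m) * (B+1)^m := by
        rw [mul_assoc, mul_assoc, hpow]; ring
    _ < 1 * (B+1)^m := by
        apply mul_lt_mul_of_pos_right key; positivity
    _ = (B+1)^m := one_mul _

theorem stmt_1 (f g h : Polynomial ℤ) (hg : g ≠ 0) (hh : h ≠ 0) (b c : ℤ) (hc : c ≠ 0)
    (hev : ∃ N : ℕ, ∀ n : ℕ, N ≤ n → seqA f g h n = c * b ^ n) :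
    ∃ k : ℤ, h = Polynomial.C k ∧ |k| ≤ |b| := by
  obtain ⟨N, hN⟩ := hev
  -- key relation
  have key : ∀ n : ℕ, N ≤ n →
      g.eval ((n:ℤ)+1) * (h.eval ((n:ℤ)+1)) ^ (n+1) = c * b ^ n * (b - f.eval ((n:ℤ)+1)) := by
    intro n hn
    have h3 : seqA f g h (n+1) = f.eval ((n:ℤ)+1) * seqA f g h n +
        g.eval ((n:ℤ)+1) * (h.eval ((n:ℤ)+1)) ^ (n+1) := rfl
    rw [hN n hn, hN (n+1) (le_trans hn (Nat.le_succ n))] at h3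
    linear_combination -h3
  -- b ≠ 0
  have hb : b ≠ 0 := by
    intro hb0
    subst hb0
    have hroots : ∀ n : ℕ, ∃ m : ℕ, n ≤ m ∧ (g * h).eval (m : ℤ) = 0 := by
      intro n
      refine ⟨N + n + 2, by omega, ?_⟩
      have hk := key (N + n + 1) (by omega)
      rw [zero_pow (by omega : N + n + 1 ≠ 0)] at hk
      simp only [mul_zero, zero_mul] at hk
      have hcast : ((N + n + 2 : ℕ) : ℤ) = ((N + n + 1 : ℕ) : ℤ) + 1 := by push_cast; ring
      rw [Polynomial.eval_mul, hcast]
      rcases mul_eq_zero.mp hk with h1 | h1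
      · rw [h1, zero_mul]
      · rw [pow_eq_zero_iff (by omega : N + n + 1 + 1 ≠ 0)] at h1
        rw [h1, mul_zero]
    exact mul_ne_zero hg hh (infRoots _ hroots)
  have hB1 : (1:ℤ) ≤ |b| := Int.one_le_abs (by omega)
  obtain ⟨M₁, hM₁⟩ := evNonzero g hg
  obtain ⟨Cq, hCq0, hCq⟩ := polyBound (Polynomial.C c * (Polynomial.C b - f))
  set d := (Polynomial.C c * (Polynomial.C b - f)).natDegree with hd
  obtain ⟨M₂, hM₂⟩ := expBeats (Cq : ℝ) (|b| : ℝ) (by exact_mod_cast hB1) d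
  set M₃ := max (max N M₁) M₂ with hM₃
  -- boundedness of h on large inputs
  have hbd : ∀ n : ℕ, M₃ ≤ n → |h.eval ((n:ℤ)+1)| ≤ |b| := by
    intro n hn
    by_contra hlt
    push_neg at hlt
    have habs : |b| + 1 ≤ |h.eval ((n:ℤ)+1)| := hlt
    have hgne : g.eval ((n:ℤ)+1) ≠ 0 := by
      have := hM₁ (n+1) (by omega)
      push_cast at this
      exact this
    have hg1 : (1:ℤ) ≤ |g.eval ((n:ℤ)+1)| := Int.one_le_abs hgne
    have hQ : |c * (b - f.eval ((n:ℤ)+1))| ≤ Cq * ((n:ℤ)+1) ^ d := by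
      have h0 := hCq (n+1) (by omega)
      rw [show ((n+1:ℕ):ℤ) = (n:ℤ)+1 from by push_cast; ring] at h0
      simp only [Polynomial.eval_mul, Polynomial.eval_sub, Polynomial.eval_C] at h0
      exact h0
    have hchain : (|b| + 1) ^ (n+1) ≤ Cq * ((n:ℤ)+1)^d * |b| ^ (n+1) := by
      calc (|b| + 1) ^ (n+1) ≤ |h.eval ((n:ℤ)+1)| ^ (n+1) :=
            pow_le_pow_left₀ (by positivity) habs _
        _ ≤ |g.eval ((n:ℤ)+1)| * |h.eval ((n:ℤ)+1)| ^ (n+1) := by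
            nlinarith [pow_nonneg (abs_nonneg (h.eval ((n:ℤ)+1))) (n+1)]
        _ = |g.eval ((n:ℤ)+1) * (h.eval ((n:ℤ)+1)) ^ (n+1)| := by
            rw [abs_mul, abs_pow]
        _ = |c * (b - f.eval ((n:ℤ)+1))| * |b| ^ n := by
            rw [key n (by omega), abs_mul, abs_mul, abs_mul, abs_pow]
            ring
        _ ≤ (Cq * ((n:ℤ)+1)^d) * |b| ^ n := by
            apply mul_le_mul_of_nonneg_right hQ (by positivity)
        _ ≤ Cq * ((n:ℤ)+1)^d * |b| ^ (n+1) := by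
            apply mul_le_mul_of_nonneg_left (pow_le_pow_right₀ hB1 (by omega))
            have : (0:ℤ) ≤ ((n:ℤ)+1)^d := by positivity
            positivity
    have hreal := hM₂ (n+1) (by omega)
    have hR : (((|b| + 1 : ℤ) : ℝ)) ^ (n+1) ≤ (Cq:ℝ) * (((n:ℤ)+1 : ℤ):ℝ)^d * ((|b| : ℤ):ℝ)^(n+1) := by
      exact_mod_cast hchain
    push_cast at hR hreal
    linarith
  -- conclude h is constant
  by_cases hex : ∃ v : ℤ, h = Polynomial.C v
  · obtain ⟨v, hv⟩ := hex
    refine ⟨v, hv, ?_⟩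
    have := hbd M₃ le_rfl
    rw [hv, Polynomial.eval_C] at this
    exact this
  · exfalso
    push_neg at hex
    set p := ∏ v ∈ Finset.Icc (-|b|) (|b|), (h - Polynomial.C v) with hp
    have hpne : p ≠ 0 := by
      rw [hp, Finset.prod_ne_zero_iff]
      intro v _ hzero
      exact hex v (by rwa [sub_eq_zero] at hzero)
    apply hpne
    apply infRoots
    intro n
    refine ⟨M₃ + n + 1, by omega, ?_⟩
    have hbdn := hbd (M₃ + n) (by omega)
    rw [abs_le] at hbdn
    have hx : ((M₃ + n + 1 : ℕ) : ℤ) = ((M₃ + n : ℕ) : ℤ) + 1 := by push_cast; ring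
    rw [hp, Polynomial.eval_prod, hx]
    refine Finset.prod_eq_zero (i := h.eval (((M₃ + n : ℕ):ℤ) + 1))
      (Finset.mem_Icc.mpr ⟨hbdn.1, hbdn.2⟩) ?_
    simp
end

section
/- Let f, g ∈ ℤ[X] with g ≢ 0, let h ∈ ℤ be a nonzero constant, let (a_n)_{n∈ℕ} = a(f,g,h) (with h regarded as a constant polynomial), and let b, c be nonzero integers such that a_n = c·b^n for all sufficiently large n. Then b divides h and |h| = |b|; that is, h = b or h = −b. -/
open Polynomial

/-- An integer polynomial vanishing at all large naturals is zero. -/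
lemma poly_eq_zero_of_eval_eventually_zero (R : Polynomial ℤ) (M : ℕ)
    (hR : ∀ n : ℕ, M ≤ n → R.eval (n : ℤ) = 0) : R = 0 := by
  apply Polynomial.eq_zero_of_infinite_isRoot
  have hsub : Set.range (fun k : ℕ => ((M + k : ℕ) : ℤ)) ⊆ {x | R.IsRoot x} := by
    rintro x ⟨k, rfl⟩
    exact hR (M + k) (Nat.le_add_right _ _)
  have hinj : Function.Injective (fun k : ℕ => ((M + k : ℕ) : ℤ)) := by
    intro a b hab
    simpa using hab
  exact (Set.infinite_range_of_injective hinj).mono hsub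

theorem stmt_2 (f g : Polynomial ℤ) (hg : g ≠ 0) (h : ℤ) (hh : h ≠ 0) (b c : ℤ)
    (hb : b ≠ 0) (hc : c ≠ 0)
    (hev : ∃ N : ℕ, ∀ n : ℕ, N ≤ n → seqA f g (Polynomial.C h) n = c * b ^ n) :
    b ∣ h ∧ |h| = |b| ∧ (h = b ∨ h = -b) := by
  obtain ⟨N, hN⟩ := hev
  obtain ⟨P, hPdef⟩ : ∃ P : Polynomial ℤ, P = C b * g := ⟨_, rfl⟩
  obtain ⟨Q, hQdef⟩ : ∃ Q : Polynomial ℤ, Q = C c * (C b - f) := ⟨_, rfl⟩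
  have hP : P ≠ 0 := hPdef ▸ mul_ne_zero (by simpa using hb) hg
  -- Key relation: for n ≥ N+1, P(n)·hⁿ = Q(n)·bⁿ
  have key : ∀ n : ℕ, N + 1 ≤ n → P.eval (n : ℤ) * h ^ n = Q.eval (n : ℤ) * b ^ n := by
    intro n hn
    obtain ⟨m, rfl⟩ : ∃ m, n = m + 1 := ⟨n - 1, by omega⟩
    have hm : N ≤ m := by omega
    have e1 := hN m hm
    have e2 := hN (m + 1) (by omega)
    rw [show seqA f g (C h) (m + 1) = f.eval ((m : ℤ) + 1) * seqA f g (C h) m +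
        g.eval ((m : ℤ) + 1) * ((C h).eval ((m : ℤ) + 1)) ^ (m + 1) from rfl,
      e1, eval_C] at e2
    simp only [hPdef, hQdef, eval_mul, eval_sub, eval_C]
    push_cast
    linear_combination b * e2
  -- Consecutive relation
  have key2 : ∀ n : ℕ, N + 1 ≤ n →
      h * P.eval ((n : ℤ) + 1) * Q.eval (n : ℤ) = b * P.eval (n : ℤ) * Q.eval ((n : ℤ) + 1) := by
    intro n hn
    have e1 := key n hn
    have e2 := key (n + 1) (by omega)
    push_cast at e2
    have hne : h ^ n * b ^ n ≠ 0 := mul_ne_zero (pow_ne_zero _ hh) (pow_ne_zero _ hb)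
    apply mul_right_cancel₀ hne
    linear_combination (Q.eval (n : ℤ) * b ^ n) * e2 -
      (b * Q.eval ((n : ℤ) + 1) * b ^ n) * e1
  have hQ : Q ≠ 0 := by
    intro hQ0
    apply hP
    apply poly_eq_zero_of_eval_eventually_zero P (N + 1)
    intro n hn
    have := key n hn
    rw [hQ0, eval_zero, zero_mul] at this
    exact (mul_eq_zero.mp this).resolve_right (pow_ne_zero _ hh)
  -- Polynomial identity
  have hpoly : C h * (P.comp (X + 1)) * Q - C b * P * (Q.comp (X + 1)) = 0 := by
    apply poly_eq_zero_of_eval_eventually_zero _ (N + 1)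
    intro n hn
    simp only [eval_sub, eval_mul, eval_comp, eval_add, eval_X, eval_one, eval_C]
    linear_combination key2 n hn
  have heq : C h * (P.comp (X + 1)) * Q = C b * P * (Q.comp (X + 1)) :=
    sub_eq_zero.mp hpoly
  -- Compare leading coefficients
  have hX1 : (X + 1 : Polynomial ℤ).natDegree ≠ 0 := by
    simpa using Polynomial.natDegree_X_add_C (1 : ℤ) ▸ one_ne_zero
  have lcX : (X + 1 : Polynomial ℤ).leadingCoeff = 1 := by
    simpa using (Polynomial.monic_X_add_C (1 : ℤ)).leadingCoeff
  have hlc := congrArg leadingCoeff heq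
  rw [leadingCoeff_mul, leadingCoeff_mul, leadingCoeff_mul, leadingCoeff_mul,
    leadingCoeff_comp hX1, leadingCoeff_comp hX1, lcX, leadingCoeff_C, leadingCoeff_C,
    one_pow, one_pow, mul_one, mul_one] at hlc
  have hPl : P.leadingCoeff ≠ 0 := leadingCoeff_ne_zero.mpr hP
  have hQl : Q.leadingCoeff ≠ 0 := leadingCoeff_ne_zero.mpr hQ
  have hhb : h = b := by
    have h1 : h * (P.leadingCoeff * Q.leadingCoeff) = b * (P.leadingCoeff * Q.leadingCoeff) := by
      linear_combination hlc
    exact mul_right_cancel₀ (mul_ne_zero hPl hQl) h1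
  exact ⟨hhb ▸ dvd_refl b, hhb ▸ rfl, Or.inl hhb⟩
end

section
/- Let f, g, h ∈ ℤ[X] with g·h ≢ 0, let (a_n)_{n∈ℕ} = a(f,g,h), and let b, c be integers such that a_n = c·b^n for all sufficiently large n. Then b ≠ 0, c ≠ 0, and the polynomial identity b·g = c·b − c·f holds in ℤ[X] (equivalently, g = c − (c/b)·f). -/
open Polynomial

/-!
For large `n` the recurrence reads `g(n+1) h(n+1)^(n+1) = c (b - f(n+1)) bⁿ`. The left side is
eventually nonzero, so `c b ≠ 0`. Multiplying by `b` gives `p(n) h(n)ⁿ = q(n) bⁿ` with `p = b g`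
and `q = c b - c f`, both nonzero. Since a polynomial cannot compensate a ratio of exponentials,
`|h(n)| = |b|` for large `n`, so `h = ±b`. For `h = b`, cancelling `bⁿ` gives `p = q`; `h = -b`
is impossible, as `p(n) (-1)ⁿ = q(n)` at even and odd `n` gives `p = q = -p`.
-/

open Filter Asymptotics

namespace Polynomial

section CharZeroDomain

variable {R : Type*} [CommRing R] [IsDomain R] [CharZero R] {p q : R[X]}

theorem eq_of_frequently_eval_natCast_eq
    (h : ∃ᶠ n : ℕ in atTop, p.eval (n : R) = q.eval (n : R)) : p = q := by
  refine eq_of_infinite_eval_eq p q <|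
    ((Nat.frequently_atTop_iff_infinite.mp h).image Nat.cast_injective.injOn).mono ?_
  rintro _ ⟨n, hn, rfl⟩
  exact hn

theorem eventually_eval_natCast_ne_zero (hp : p ≠ 0) :
    ∀ᶠ n : ℕ in atTop, p.eval (n : R) ≠ 0 :=
  not_frequently.mp fun h => hp (eq_of_frequently_eval_natCast_eq (q := 0) (by simpa using h))

theorem eq_zero_of_eventually_eval_mul_neg_one_pow_eq
    (h : ∀ᶠ n : ℕ in atTop, p.eval (n : R) * (-1) ^ n = q.eval (n : R)) : q = 0 := by
  have hmono (r : ℕ) : StrictMono fun k : ℕ => 2 * k + r := fun a b hab => by dsimp only; omega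
  have h_even : p = q := eq_of_frequently_eval_natCast_eq <|
    (hmono 0).tendsto_atTop.frequently <|
      ((hmono 0).tendsto_atTop.eventually h).frequently.mono fun k hk => by simpa [pow_mul] using hk
  have h_odd : -p = q := eq_of_frequently_eval_natCast_eq <|
    (hmono 1).tendsto_atTop.frequently <|
      ((hmono 1).tendsto_atTop.eventually h).frequently.mono fun k hk => by
        simpa [pow_succ, pow_mul] using hk
  rw [h_even] at h_odd
  exact CharZero.neg_eq_self_iff.mp h_odd

end CharZeroDomain

theorem eventually_abs_eval_mul_pow_lt_pow (p : ℤ[X]) {A B : ℤ} (hA : 0 ≤ A) (hAB : A < B) :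
    ∀ᶠ n : ℕ in atTop, |p.eval (n : ℤ)| * A ^ n < B ^ n := by
  have hp : (fun n : ℕ => p.eval (n : ℤ)) =O[atTop] fun n : ℕ => (n : ℤ) ^ p.natDegree := by
    have hdeg : p.degree ≤ ((X : ℤ[X]) ^ p.natDegree).degree := by
      simp [degree_le_natDegree]
    simpa [Function.comp_def] using
      (isBigO_cobounded_of_degree_le hdeg).comp_tendsto tendsto_natCast_atTop_cobounded
  have hA' : ‖A‖ < (B : ℝ) := by
    rw [Int.norm_eq_abs, abs_of_nonneg (by exact_mod_cast hA)]
    exact_mod_cast hAB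
  have ho := (hp.mul (isBigO_refl (fun n : ℕ => A ^ n) atTop)).trans_isLittleO
    (isLittleO_pow_const_mul_const_pow_const_pow_of_norm_lt p.natDegree hA')
  have hB : (0 : ℝ) < B := by exact_mod_cast hA.trans_lt hAB
  filter_upwards [ho.eventuallyLT_norm_of_eventually_pos
    (.of_forall fun n => norm_pos_iff.mpr (pow_ne_zero n hB.ne'))] with n hn
  rw [Real.norm_eq_abs, abs_of_pos (by positivity), Int.norm_eq_abs] at hn
  push_cast at hn
  rw [abs_mul, abs_pow, abs_of_nonneg (a := (A : ℝ)) (by exact_mod_cast hA)] at hn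
  exact_mod_cast hn

theorem eventually_abs_eval_eq_abs_of_eval_mul_pow_eq {p q h : ℤ[X]} {b : ℤ} (hb : b ≠ 0)
    (hp : p ≠ 0) (hq : q ≠ 0)
    (H : ∀ᶠ n : ℕ in atTop, p.eval (n : ℤ) * h.eval (n : ℤ) ^ n = q.eval (n : ℤ) * b ^ n) :
    ∀ᶠ n : ℕ in atTop, |h.eval (n : ℤ)| = |b| := by
  have hb1 : 0 ≤ |b| - 1 := by have := Int.one_le_abs hb; omega
  filter_upwards [H, eventually_eval_natCast_ne_zero hp, eventually_eval_natCast_ne_zero hq,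
    p.eventually_abs_eval_mul_pow_lt_pow hb1 (sub_one_lt |b|),
    q.eventually_abs_eval_mul_pow_lt_pow (abs_nonneg b) (lt_add_one |b|)]
    with n hn hpn hqn hp_lt hq_lt
  have habs : |p.eval (n : ℤ)| * |h.eval (n : ℤ)| ^ n = |q.eval (n : ℤ)| * |b| ^ n := by
    simpa only [abs_mul, abs_pow] using congrArg abs hn
  rcases lt_trichotomy |h.eval (n : ℤ)| |b| with hlt | heq | hgt
  · have := calc
      |p.eval (n : ℤ)| * |h.eval (n : ℤ)| ^ n ≤ |p.eval (n : ℤ)| * (|b| - 1) ^ n := by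
        gcongr; omega
      _ < |b| ^ n := hp_lt
      _ ≤ |q.eval (n : ℤ)| * |b| ^ n :=
        le_mul_of_one_le_left (by positivity) (Int.one_le_abs hqn)
    omega
  · exact heq
  · have := calc
      |q.eval (n : ℤ)| * |b| ^ n < (|b| + 1) ^ n := hq_lt
      _ ≤ |h.eval (n : ℤ)| ^ n := by gcongr; omega
      _ ≤ |p.eval (n : ℤ)| * |h.eval (n : ℤ)| ^ n :=
        le_mul_of_one_le_left (by positivity) (Int.one_le_abs hpn)
    omega

theorem eq_of_eventually_eval_mul_pow_eq {p q h : ℤ[X]} {b : ℤ} (hb : b ≠ 0) (hp : p ≠ 0)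
    (hh : h ≠ 0)
    (H : ∀ᶠ n : ℕ in atTop, p.eval (n : ℤ) * h.eval (n : ℤ) ^ n = q.eval (n : ℤ) * b ^ n) :
    p = q := by
  have hq : q ≠ 0 := by
    rintro rfl
    obtain ⟨n, hn, hpn, hhn⟩ := (H.and ((eventually_eval_natCast_ne_zero hp).and
      (eventually_eval_natCast_ne_zero hh))).exists
    exact mul_ne_zero hpn (pow_ne_zero n hhn) (by simpa using hn)
  have h_pm : h = C b ∨ h = C (-b) := by
    have := (eventually_abs_eval_eq_abs_of_eval_mul_pow_eq hb hp hq H).frequently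
    refine (frequently_or_distrib.mp (this.mono fun n hn => abs_eq_abs.mp hn)).imp ?_ ?_ <;>
      exact fun h' => eq_of_frequently_eval_natCast_eq (by simpa using h')
  rcases h_pm with rfl | rfl
  · refine eq_of_frequently_eval_natCast_eq (H.frequently.mono fun n hn => ?_)
    rw [eval_C] at hn
    exact mul_right_cancel₀ (pow_ne_zero n hb) hn
  · refine absurd (eq_zero_of_eventually_eval_mul_neg_one_pow_eq (p := p) ?_) hq
    filter_upwards [H] with n hn
    rw [eval_C, neg_pow] at hn
    exact mul_right_cancel₀ (pow_ne_zero n hb) (by linear_combination hn)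

end Polynomial

theorem eval_mul_pow_eq_of_seqA_eq {f g h : ℤ[X]} {b c : ℤ} {n : ℕ}
    (hn : seqA f g h n = c * b ^ n) (hn1 : seqA f g h (n + 1) = c * b ^ (n + 1)) :
    g.eval ((n : ℤ) + 1) * h.eval ((n : ℤ) + 1) ^ (n + 1) =
      c * (b - f.eval ((n : ℤ) + 1)) * b ^ n := by
  rw [seqA, hn] at hn1
  linear_combination hn1

theorem eventually_eval_mul_pow_eq_of_seqA_eq {f g h : ℤ[X]} {b c : ℤ} {N : ℕ}
    (hN : ∀ n : ℕ, N ≤ n → seqA f g h n = c * b ^ n) :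
    ∀ᶠ n : ℕ in atTop,
      (C b * g).eval (n : ℤ) * h.eval (n : ℤ) ^ n = (C (c * b) - C c * f).eval (n : ℤ) * b ^ n := by
  filter_upwards [eventually_gt_atTop N] with m hm
  obtain ⟨n, rfl⟩ := Nat.exists_eq_add_of_lt hm
  have hrec := eval_mul_pow_eq_of_seqA_eq (hN (N + n) le_self_add) (hN (N + n + 1) (by omega))
  simp only [eval_mul, eval_sub, eval_C]
  push_cast at hrec ⊢
  linear_combination b * hrec

theorem stmt_4 (f g h : Polynomial ℤ) (hgh : g * h ≠ 0) (b c : ℤ)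
    (hev : ∃ N : ℕ, ∀ n : ℕ, N ≤ n → seqA f g h n = c * b ^ n) :
    b ≠ 0 ∧ c ≠ 0 ∧ Polynomial.C b * g = Polynomial.C (c * b) - Polynomial.C c * f := by
  obtain ⟨N, hN⟩ := hev
  have hg : g ≠ 0 := left_ne_zero_of_mul hgh
  have hh : h ≠ 0 := right_ne_zero_of_mul hgh
  have hcb : c * b ≠ 0 := by
    intro hcb
    obtain ⟨n, hn, hgn, hhn⟩ := ((eventually_ge_atTop (N + 1)).and
      ((tendsto_add_atTop_nat 1).eventually ((eventually_eval_natCast_ne_zero hg).and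
        (eventually_eval_natCast_ne_zero hh)))).exists
    push_cast at hgn hhn
    refine mul_ne_zero hgn (pow_ne_zero (n + 1) hhn) ?_
    rw [eval_mul_pow_eq_of_seqA_eq (hN n (by omega)) (hN (n + 1) (by omega))]
    rcases mul_eq_zero.mp hcb with rfl | rfl
    · ring
    · simp [zero_pow (by omega : n ≠ 0)]
  have hb : b ≠ 0 := right_ne_zero_of_mul hcb
  exact ⟨hb, left_ne_zero_of_mul hcb, eq_of_eventually_eval_mul_pow_eq hb
    (mul_ne_zero (C_ne_zero.mpr hb) hg) hh (eventually_eval_mul_pow_eq_of_seqA_eq hN)⟩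
end

section
/- Let f, g, h ∈ ℤ[X] with g·h ≢ 0, let (a_n)_{n∈ℕ} = a(f,g,h), and let b, c be integers such that a_n = c·b^n for all sufficiently large n. Suppose the set {n ∈ ℕ : f(n) = 0} is nonempty and let n₀ be its minimum. Then for every n ∈ ℕ, a_n = c·b^n if and only if n ≥ n₀. -/
open Polynomial Filter

lemma ev_ne (p : Polynomial ℤ) (hp : p ≠ 0) : ∃ M : ℕ, ∀ n : ℕ, M ≤ n → p.eval (n:ℤ) ≠ 0 := by
  obtain ⟨x₀, hx₀⟩ := p.exists_max_root hp
  refine ⟨x₀.toNat + 1, fun n hn hcon => ?_⟩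
  have := hx₀ _ hcon
  omega

lemma poly_zero (p : Polynomial ℤ) (u : ℕ → ℤ) (hu : StrictMono u)
    (h : ∀ n, p.eval (u n) = 0) : p = 0 :=
  p.eq_zero_of_infinite_isRoot (Set.infinite_of_injective_forall_mem hu.injective h)

lemma ev_bd (p : Polynomial ℤ) : ∃ A : ℕ, 0 < A ∧
    ∀ n : ℕ, 1 ≤ n → |p.eval (n:ℤ)| ≤ (A:ℤ) * (n:ℤ) ^ p.natDegree := by
  refine ⟨(∑ i ∈ Finset.range (p.natDegree+1), (p.coeff i).natAbs) + 1, Nat.succ_pos _,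
    fun n hn => ?_⟩
  have hn1 : (1:ℤ) ≤ (n:ℤ) := by exact_mod_cast hn
  rw [Polynomial.eval_eq_sum_range]
  calc |∑ i ∈ Finset.range (p.natDegree+1), p.coeff i * (n:ℤ)^i|
      ≤ ∑ i ∈ Finset.range (p.natDegree+1), |p.coeff i * (n:ℤ)^i| :=
        Finset.abs_sum_le_sum_abs _ _
    _ ≤ ∑ i ∈ Finset.range (p.natDegree+1), |p.coeff i| * (n:ℤ)^p.natDegree := by
        apply Finset.sum_le_sum; intro i hi
        rw [abs_mul]
        apply mul_le_mul_of_nonneg_left ?_ (abs_nonneg _)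
        rw [abs_pow, abs_of_nonneg (by positivity : (0:ℤ) ≤ (n:ℤ))]
        exact pow_le_pow_right₀ hn1 (Finset.mem_range_succ_iff.mp hi)
    _ ≤ _ := by
        rw [← Finset.sum_mul]
        apply mul_le_mul_of_nonneg_right ?_ (by positivity)
        push_cast [Int.natCast_natAbs]
        linarith [abs_nonneg (p.coeff 0)]


lemma no_growth (A D K : ℕ) (q r : ℤ) (hq : 0 ≤ q) (hqr : q < r)
    (H : ∀ n : ℕ, K ≤ n → r ^ n ≤ (A:ℤ) * ((n:ℤ)+1) ^ D * q ^ n) : False := by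
  have hr : 0 < r := lt_of_le_of_lt hq hqr
  rcases eq_or_lt_of_le hq with hq0 | hq0
  · have := H (K+1) (by omega)
    rw [← hq0] at this
    simp [zero_pow] at this
    nlinarith [pow_pos hr (K+1)]
  · -- 0 < q < r
    set x : ℝ := (q:ℝ) / (r:ℝ) with hx
    have hrR : (0:ℝ) < (r:ℝ) := by exact_mod_cast hr
    have hqR : (0:ℝ) < (q:ℝ) := by exact_mod_cast hq0
    have hx0 : 0 < x := div_pos hqR hrR
    have hx1 : x < 1 := (div_lt_one hrR).mpr (by exact_mod_cast hqr)
    have hsum : Summable (fun n : ℕ => (n:ℝ) ^ D * x ^ n) :=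
      summable_pow_mul_geometric_of_norm_lt_one D
        (by rw [Real.norm_eq_abs, abs_of_pos hx0]; exact hx1)
    have htend : Tendsto (fun n : ℕ => (n:ℝ) ^ D * x ^ n) atTop (nhds 0) :=
      hsum.tendsto_atTop_zero
    have htend2 : Tendsto (fun n : ℕ => ((n:ℝ)+1) ^ D * x ^ (n+1)) atTop (nhds 0) := by
      have := htend.comp (tendsto_add_atTop_nat 1)
      refine this.congr (fun n => ?_)
      simp only [Function.comp]
      push_cast
      ring
    have htend3 : Tendsto (fun n : ℕ => ((n:ℝ)+1) ^ D * x ^ n) atTop (nhds 0) := by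
      have := htend2.const_mul (1/x)
      simp only [mul_zero] at this
      refine this.congr (fun n => ?_)
      field_simp [pow_succ]
      ring
    have hev := htend3.eventually (gt_mem_nhds (show (0:ℝ) < 1/((A:ℝ)+1) by positivity))
    obtain ⟨K₂, hK₂⟩ := eventually_atTop.mp hev
    set n := max K K₂ with hn
    have h1 := H n (le_max_left _ _)
    have h2 := hK₂ n (le_max_right _ _)
    -- from h1: 1 ≤ A * (n+1)^D * x^n in ℝ
    have h1R : (r:ℝ)^n ≤ (A:ℝ) * ((n:ℝ)+1)^D * (q:ℝ)^n := by exact_mod_cast h1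
    have hrn : (0:ℝ) < (r:ℝ)^n := pow_pos hrR n
    have key : (1:ℝ) ≤ (A:ℝ) * (((n:ℝ)+1)^D * x^n) := by
      rw [hx, div_pow, mul_div_assoc', ← mul_div_assoc, le_div_iff₀ hrn, one_mul]
      calc (r:ℝ)^n ≤ (A:ℝ) * ((n:ℝ)+1)^D * (q:ℝ)^n := h1R
        _ = (A:ℝ) * (((n:ℝ)+1)^D * (q:ℝ)^n) := by ring
        _ = _ := by ring
    have : (A:ℝ) * (((n:ℝ)+1)^D * x^n) < (A:ℝ) * (1/((A:ℝ)+1)) := by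
      rcases Nat.eq_zero_or_pos A with hA | hA
      · simp [hA] at key
        linarith
      · exact mul_lt_mul_of_pos_left h2 (by exact_mod_cast hA)
    have : (A:ℝ) * (1/((A:ℝ)+1)) < 1 := by
      rw [mul_one_div, div_lt_one (by positivity)]
      linarith
    linarith

lemma ev_big (p : Polynomial ℤ) (hd : p.natDegree ≠ 0) (C : ℤ) :
    ∃ M : ℕ, ∀ n : ℕ, M ≤ n → C ≤ |p.eval (n:ℤ)| := by
  have hp : p ≠ 0 := fun h => hd (by simp [h])
  set P : Polynomial ℝ := p.map (Int.castRingHom ℝ) with hP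
  have hinj : Function.Injective (Int.castRingHom ℝ) := fun a b hab => by simpa using hab
  have hnd : P.natDegree = p.natDegree := p.natDegree_map_eq_of_injective hinj
  have hPdeg : 0 < P.degree := by
    rw [← natDegree_pos_iff_degree_pos, hnd]
    omega
  have htend : Tendsto (fun x : ℝ => |P.eval x|) atTop atTop :=
    Polynomial.abs_tendsto_atTop P hPdeg
  have htend2 : Tendsto (fun n : ℕ => |P.eval (n:ℝ)|) atTop atTop :=
    htend.comp tendsto_natCast_atTop_atTop
  obtain ⟨M, hM⟩ := eventually_atTop.mp (htend2.eventually_ge_atTop (C:ℝ))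
  refine ⟨M, fun n hn => ?_⟩
  have h1 := hM n hn
  have h2 : P.eval ((n:ℕ):ℝ) = ((p.eval (n:ℤ) : ℤ) : ℝ) := by
    rw [hP]
    rw [show ((n:ℕ):ℝ) = (Int.castRingHom ℝ) ((n:ℕ):ℤ) by simp]
    rw [eval_map, eval₂_at_apply]
    simp
  rw [h2] at h1
  rw [← Int.cast_abs] at h1
  exact_mod_cast h1

theorem stmt_5 (f g h : Polynomial ℤ) (hgh : g * h ≠ 0) (b c : ℤ)
    (hev : ∃ N : ℕ, ∀ n : ℕ, N ≤ n → seqA f g h n = c * b ^ n)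
    (n₀ : ℕ) (hn₀ : IsLeast {n : ℕ | f.eval (n : ℤ) = 0} n₀) :
    ∀ n : ℕ, seqA f g h n = c * b ^ n ↔ n₀ ≤ n := by
  obtain ⟨N, hN⟩ := hev
  obtain ⟨n₀mem, n₀min⟩ := hn₀
  have n₀mem' : f.eval ((n₀:ℕ):ℤ) = 0 := n₀mem
  have hg0 : g ≠ 0 := fun h' => hgh (by simp [h'])
  have hh0 : h ≠ 0 := fun h' => hgh (by simp [h'])
  obtain ⟨M, hM⟩ := ev_ne (g*h) hgh
  set L : ℕ := max N M + 2 with hLdef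
  have hL2 : 2 ≤ L := by omega
  -- the key relation
  have rel : ∀ n : ℕ, L ≤ n + 1 →
      g.eval ((n:ℤ)+1) * (h.eval ((n:ℤ)+1))^(n+1) = c * b^n * (b - f.eval ((n:ℤ)+1)) := by
    intro n hn
    have h1 : seqA f g h (n+1) = c * b^(n+1) := hN _ (by omega)
    have h2 : seqA f g h n = c * b^n := hN _ (by omega)
    rw [show seqA f g h (n+1) = f.eval ((n:ℤ)+1) * seqA f g h n +
        g.eval ((n:ℤ)+1) * (h.eval ((n:ℤ)+1)) ^ (n+1) from rfl, h2] at h1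
    linear_combination h1
  have hgh' : ∀ n : ℕ, L ≤ n + 1 → g.eval ((n:ℤ)+1) ≠ 0 ∧ h.eval ((n:ℤ)+1) ≠ 0 := by
    intro n hn
    have := hM (n+1) (by omega)
    push_cast at this
    rw [eval_mul] at this
    exact mul_ne_zero_iff.mp this
  have hlhs : ∀ n : ℕ, L ≤ n + 1 →
      g.eval ((n:ℤ)+1) * (h.eval ((n:ℤ)+1))^(n+1) ≠ 0 := by
    intro n hn
    exact mul_ne_zero (hgh' n hn).1 (pow_ne_zero _ (hgh' n hn).2)
  have hbc : b ≠ 0 ∧ c ≠ 0 := by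
    have h1 := rel L (by omega)
    have h2 := hlhs L (by omega)
    rw [h1] at h2
    constructor
    · intro hb; apply h2; rw [hb]; simp [zero_pow (by omega : L ≠ 0)]
    · intro hc; apply h2; rw [hc]; ring
  obtain ⟨hb, hc⟩ := hbc
  have hbf : ∀ n : ℕ, L ≤ n + 1 → b - f.eval ((n:ℤ)+1) ≠ 0 := by
    intro n hn
    have h1 := rel n hn
    have h2 := hlhs n hn
    rw [h1] at h2
    exact fun hcon => h2 (by rw [hcon]; ring)
  obtain ⟨Af, hAf0, hAf⟩ := ev_bd f
  obtain ⟨Ag, hAg0, hAg⟩ := ev_bd g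
  -- Claim I : h cannot be eventually ≥ |b|+1 in absolute value
  have claimI : ¬ ∃ K : ℕ, ∀ n : ℕ, K ≤ n → |b| + 1 ≤ |h.eval (n:ℤ)| := by
    rintro ⟨K, hK⟩
    apply no_growth (c.natAbs * (b.natAbs + Af)) f.natDegree (max K L + 1) |b| (|b|+1)
      (abs_nonneg b) (lt_add_one _)
    intro n hn
    have h1 := rel n (by omega)
    have h2 := hK (n+1) (by omega)
    push_cast at h2
    have h3 := (hgh' n (by omega)).1
    have h4 := hAf (n+1) (by omega)
    push_cast at h4
    have hb1 : (0:ℤ) ≤ |b| + 1 := by positivity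
    calc (|b|+1)^n ≤ (|b|+1)^(n+1) :=
          pow_le_pow_right₀ (by linarith [abs_nonneg b]) (by omega)
      _ ≤ |h.eval ((n:ℤ)+1)|^(n+1) := pow_le_pow_left₀ hb1 h2 _
      _ ≤ |g.eval ((n:ℤ)+1)| * |h.eval ((n:ℤ)+1)|^(n+1) :=
          le_mul_of_one_le_left (by positivity) (Int.one_le_abs h3)
      _ = |g.eval ((n:ℤ)+1) * (h.eval ((n:ℤ)+1))^(n+1)| := by rw [abs_mul, abs_pow]
      _ = |c| * |b|^n * |b - f.eval ((n:ℤ)+1)| := by rw [h1, abs_mul, abs_mul, abs_pow]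
      _ ≤ |c| * |b|^n * ((|b| + (Af:ℤ)) * ((n:ℤ)+1)^f.natDegree) := by
          apply mul_le_mul_of_nonneg_left ?_ (by positivity)
          calc |b - f.eval ((n:ℤ)+1)| ≤ |b| + |f.eval ((n:ℤ)+1)| := abs_sub _ _
            _ ≤ |b| + (Af:ℤ) * ((n:ℤ)+1)^f.natDegree := by linarith
            _ ≤ (|b| + (Af:ℤ)) * ((n:ℤ)+1)^f.natDegree := by
                have hp1 : (1:ℤ) ≤ ((n:ℤ)+1)^f.natDegree :=
                  one_le_pow₀ (by omega)
                nlinarith [abs_nonneg b]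
      _ ≤ (↑(c.natAbs * (b.natAbs + Af)):ℤ) * ((n:ℤ)+1)^f.natDegree * |b|^n := by
          push_cast [Int.natCast_natAbs]
          nlinarith [pow_nonneg (abs_nonneg b) n, abs_nonneg c,
            pow_nonneg (by positivity : (0:ℤ) ≤ (n:ℤ)+1) f.natDegree]
  -- h is constant
  have hdeg : h.natDegree = 0 := by
    by_contra hd
    obtain ⟨M₂, hM₂⟩ := ev_big h hd (|b|+1)
    exact claimI ⟨M₂, hM₂⟩
  obtain ⟨h₀, hC⟩ := Polynomial.natDegree_eq_zero.mp hdeg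
  have hsmall : |h₀| ≤ |b| := by
    by_contra hbig
    exact claimI ⟨0, fun n _ => by rw [← hC, eval_C]; omega⟩
  have hb1 : (1:ℤ) ≤ |b| := Int.one_le_abs hb
  have claimIII : ¬ (|h₀| < |b|) := by
    intro hlt
    apply no_growth (Ag * b.natAbs) g.natDegree (L+1) |h₀| |b| (abs_nonneg _) hlt
    intro n hn
    have h1 := rel n (by omega)
    rw [← hC, eval_C] at h1
    have h2 := hbf n (by omega)
    have h4 := hAg (n+1) (by omega)
    push_cast at h4
    calc |b|^n ≤ |c| * |b|^n := le_mul_of_one_le_left (by positivity) (Int.one_le_abs hc)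
      _ ≤ |c| * |b|^n * |b - f.eval ((n:ℤ)+1)| :=
          le_mul_of_one_le_right (by positivity) (Int.one_le_abs h2)
      _ = |c * b^n * (b - f.eval ((n:ℤ)+1))| := by rw [abs_mul, abs_mul, abs_pow]
      _ = |g.eval ((n:ℤ)+1)| * |h₀|^(n+1) := by rw [← h1, abs_mul, abs_pow]
      _ ≤ ((Ag:ℤ) * ((n:ℤ)+1)^g.natDegree) * |h₀|^(n+1) :=
          mul_le_mul_of_nonneg_right h4 (by positivity)
      _ ≤ (↑(Ag * b.natAbs):ℤ) * ((n:ℤ)+1)^g.natDegree * |h₀|^n := by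
          push_cast [Int.natCast_natAbs]
          rw [pow_succ]
          have t : |h₀| ^ n * |h₀| ≤ |h₀| ^ n * |b| :=
            mul_le_mul_of_nonneg_left hlt.le (pow_nonneg (abs_nonneg h₀) n)
          calc (Ag:ℤ) * ((n:ℤ)+1)^g.natDegree * (|h₀| ^ n * |h₀|)
              ≤ (Ag:ℤ) * ((n:ℤ)+1)^g.natDegree * (|h₀| ^ n * |b|) :=
                mul_le_mul_of_nonneg_left t (by positivity)
            _ = (Ag:ℤ) * |b| * ((n:ℤ)+1)^g.natDegree * |h₀| ^ n := by ring
  have habs : |h₀| = |b| := le_antisymm hsmall (not_lt.mp claimIII)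
  have cancel : ∀ n : ℕ, L ≤ n + 1 →
      h₀^(n+1) * g.eval ((n:ℤ)+1) = c * b^n * (b - f.eval ((n:ℤ)+1)) := by
    intro n hn
    have h1 := rel n hn
    rw [← hC, eval_C] at h1
    linear_combination h1
  -- the polynomial identity
  set P : Polynomial ℤ := C b * g - C c * (C b - f) with hP
  set Q : Polynomial ℤ := C b * g + C c * (C b - f) with hQ
  have hhb : h₀ = b := by
    rcases abs_eq_abs.mp habs with hcase | hcase
    · exact hcase
    · -- h₀ = -b : contradiction
      exfalso
      have hPz : P = 0 := by
        apply poly_zero P (fun j => ((2*(L + j)+1 : ℕ):ℤ) + 1)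
          (fun a b' hab => by push_cast; omega)
        intro j
        have e1 := cancel (2*(L+j)+1) (by omega)
        rw [hcase] at e1
        have hev2 : Even (2*(L+j)+1+1) := ⟨L+j+1, by ring⟩
        rw [hev2.neg_pow] at e1
        have e2 : b^(2*(L+j)+1) * P.eval (((2*(L+j)+1 : ℕ):ℤ) + 1) = 0 := by
          simp only [hP, eval_sub, eval_mul, eval_C]
          push_cast at e1 ⊢
          linear_combination e1
        rcases mul_eq_zero.mp e2 with e3 | e3
        · exact absurd e3 (pow_ne_zero _ hb)
        · exact e3
      have hQz : Q = 0 := by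
        apply poly_zero Q (fun j => ((2*(L + j) : ℕ):ℤ) + 1)
          (fun a b' hab => by push_cast; omega)
        intro j
        have e1 := cancel (2*(L+j)) (by omega)
        rw [hcase] at e1
        have hod : Odd (2*(L+j)+1) := ⟨L+j, by ring⟩
        rw [hod.neg_pow] at e1
        have e2 : b^(2*(L+j)) * Q.eval (((2*(L+j) : ℕ):ℤ) + 1) = 0 := by
          simp only [hQ, eval_add, eval_sub, eval_mul, eval_C]
          push_cast at e1 ⊢
          linear_combination -e1
        rcases mul_eq_zero.mp e2 with e3 | e3
        · exact absurd e3 (pow_ne_zero _ hb)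
        · exact e3
      have h2g : (2 : Polynomial ℤ) * (C b * g) = 0 := by
        rw [show (2 : Polynomial ℤ) * (C b * g) = P + Q by rw [hP, hQ]; ring, hPz, hQz,
          add_zero]
      rcases mul_eq_zero.mp h2g with e3 | e3
      · exact two_ne_zero e3
      · rcases mul_eq_zero.mp e3 with e4 | e4
        · exact hb (by simpa using e4)
        · exact hg0 e4
  have id1 : ∀ x : ℤ, b * g.eval x = c * (b - f.eval x) := by
    have hPzero : P = 0 := by
      apply poly_zero P (fun j => ((L + j : ℕ):ℤ) + 1)
        (fun a b' hab => by push_cast; omega)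
      intro j
      have e1 := cancel (L+j) (by omega)
      rw [hhb] at e1
      have e2 : b^(L+j) * P.eval (((L + j : ℕ):ℤ) + 1) = 0 := by
        simp only [hP, eval_sub, eval_mul, eval_C]
        push_cast at e1 ⊢
        linear_combination e1
      rcases mul_eq_zero.mp e2 with e3 | e3
      · exact absurd e3 (pow_ne_zero _ hb)
      · exact e3
    intro x
    have := congrArg (Polynomial.eval x) hPzero
    simp only [hP, eval_sub, eval_mul, eval_C, eval_zero] at this
    linarith
  have hCb : h = C b := by rw [← hC, hhb]
  have step : ∀ n : ℕ, seqA f g h (n+1) - c * b^(n+1) =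
      f.eval ((n:ℤ)+1) * (seqA f g h n - c * b^n) := by
    intro n
    rw [show seqA f g h (n+1) = f.eval ((n:ℤ)+1) * seqA f g h n +
        g.eval ((n:ℤ)+1) * (h.eval ((n:ℤ)+1)) ^ (n+1) from rfl]
    rw [hCb, eval_C]
    linear_combination (b:ℤ)^n * (id1 ((n:ℤ)+1))
  have base : b * (seqA f g h 0 - c * b^0) = - (c * f.eval 0) := by
    rw [show seqA f g h 0 = g.eval 0 from rfl]
    linear_combination id1 0
  have aux : ∀ n : ℕ, (n < n₀ → seqA f g h n - c * b^n ≠ 0) ∧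
      (n₀ ≤ n → seqA f g h n - c * b^n = 0) := by
    intro n
    induction n with
    | zero =>
      constructor
      · intro hlt hz
        rw [hz, mul_zero] at base
        have hf0 : f.eval 0 ≠ 0 := by
          intro hf
          have : n₀ ≤ 0 := n₀min (show f.eval (((0:ℕ)):ℤ) = 0 by simpa using hf)
          omega
        have hcf : c * f.eval 0 = 0 := by linarith
        rcases mul_eq_zero.mp hcf with e | e
        · exact hc e
        · exact hf0 e
      · intro hle
        have hn0 : n₀ = 0 := le_antisymm hle (Nat.zero_le _)
        have hf0 : f.eval 0 = 0 := by rw [hn0] at n₀mem'; simpa using n₀mem'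
        rw [hf0, mul_zero, neg_zero] at base
        exact (mul_eq_zero.mp base).resolve_left hb
    | succ n ih =>
      constructor
      · intro hlt hz
        rw [step n] at hz
        rcases mul_eq_zero.mp hz with e | e
        · have : n₀ ≤ n+1 := n₀min (show f.eval (((n+1:ℕ)):ℤ) = 0 by push_cast; exact e)
          omega
        · exact ih.1 (by omega) e
      · intro hle
        rw [step n]
        rcases Nat.lt_or_ge n n₀ with hlt | hge
        · have hn1 : n₀ = n+1 := by omega
          have hfz : f.eval ((n:ℤ)+1) = 0 := by
            have := n₀mem'
            rw [hn1] at this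
            push_cast at this
            exact this
          rw [hfz, zero_mul]
        · rw [ih.2 hge, mul_zero]
  intro n
  constructor
  · intro hn
    by_contra hcon
    exact (aux n).1 (by omega) (by rw [hn]; ring)
  · intro hn
    have := (aux n).2 hn
    linarith
end

section
/- Let f, g ∈ ℤ[X], let b, c be integers with b ≠ 0 satisfying the polynomial identity b·g = c·b − c·f, let h be the constant polynomial b, and let (a_n)_{n∈ℕ} = a(f,g,h). Then for every n ≥ 1: (i) if a_{n−1} = c·b^{n−1}, then a_n = c·b^n; and (ii) if f(n) = 0, then a_n = c·b^n. -/
open Polynomial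

theorem stmt_7 (f g : Polynomial ℤ) (b c : ℤ) (hb : b ≠ 0)
    (hpoly : Polynomial.C b * g = Polynomial.C (c * b) - Polynomial.C c * f) :
    ∀ n : ℕ, 1 ≤ n →
      (seqA f g (Polynomial.C b) (n - 1) = c * b ^ (n - 1) →
        seqA f g (Polynomial.C b) n = c * b ^ n) ∧
      (f.eval (n : ℤ) = 0 → seqA f g (Polynomial.C b) n = c * b ^ n) := by
  intro n hn
  obtain ⟨m, rfl⟩ : ∃ m, n = m + 1 := ⟨n - 1, (Nat.succ_pred_eq_of_pos hn).symm⟩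
  have hx : (↑(m + 1) : ℤ) = (m : ℤ) + 1 := by push_cast; ring
  have hev : b * g.eval ((m : ℤ) + 1) = c * b - c * f.eval ((m : ℤ) + 1) := by
    have := congrArg (Polynomial.eval ((m : ℤ) + 1)) hpoly
    simpa using this
  constructor
  · intro hprev
    simp only [Nat.add_sub_cancel] at hprev
    show f.eval ((m : ℤ) + 1) * seqA f g (Polynomial.C b) m +
        g.eval ((m : ℤ) + 1) * ((Polynomial.C b).eval ((m : ℤ) + 1)) ^ (m + 1) = c * b ^ (m + 1)
    rw [hprev, Polynomial.eval_C]
    have : b * (f.eval ((m : ℤ) + 1) * (c * b ^ m) + g.eval ((m : ℤ) + 1) * b ^ (m + 1)) =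
        b * (c * b ^ (m + 1)) := by
      rw [mul_add, show b * (g.eval ((m : ℤ) + 1) * b ^ (m + 1)) =
        (b * g.eval ((m : ℤ) + 1)) * b ^ (m + 1) by ring, hev]
      ring
    exact mul_left_cancel₀ hb this
  · intro hf
    rw [hx] at hf
    show f.eval ((m : ℤ) + 1) * seqA f g (Polynomial.C b) m +
        g.eval ((m : ℤ) + 1) * ((Polynomial.C b).eval ((m : ℤ) + 1)) ^ (m + 1) = c * b ^ (m + 1)
    rw [hf, Polynomial.eval_C, zero_mul, zero_add]
    rw [hf, mul_zero, sub_zero] at hev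
    have : b * (g.eval ((m : ℤ) + 1) * b ^ (m + 1)) = b * (c * b ^ (m + 1)) := by
      rw [show b * (g.eval ((m : ℤ) + 1) * b ^ (m + 1)) =
        (b * g.eval ((m : ℤ) + 1)) * b ^ (m + 1) by ring, hev]; ring
    exact mul_left_cancel₀ hb this
end

section
/- Let f, g ∈ ℤ[X], let b, c be integers with b ≠ 0 satisfying the polynomial identity b·g = c·b − c·f, let h be the constant polynomial b, and let (a_n)_{n∈ℕ} = a(f,g,h). If for some n ≥ 1 one has a_n = c·b^n but a_{n−1} ≠ c·b^{n−1}, then f(n) = 0. -/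
open Polynomial

/- Multiplying the recurrence by b and substituting b·g(n) = c·b − c·f(n) shows that the
deviation aₙ − c·bⁿ from the geometric sequence c·bⁿ obeys the homogeneous recurrence
dₙ = f(n)·dₙ₋₁. So it can only jump from nonzero to zero at a root of f. -/

theorem seqA_C_succ_sub_eq {f g : Polynomial ℤ} {b c : ℤ} (hb : b ≠ 0)
    (hpoly : C b * g = C (c * b) - C c * f) (n : ℕ) :
    seqA f g (C b) (n + 1) - c * b ^ (n + 1) =
      f.eval ((n : ℤ) + 1) * (seqA f g (C b) n - c * b ^ n) := by
  have hpoly_eval := congrArg (eval ((n : ℤ) + 1)) hpoly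
  simp only [eval_mul, eval_sub, eval_C] at hpoly_eval
  refine mul_left_cancel₀ hb ?_
  simp only [seqA, eval_C]
  linear_combination b ^ (n + 1) * hpoly_eval

theorem stmt_8 (f g : Polynomial ℤ) (b c : ℤ) (hb : b ≠ 0)
    (hpoly : Polynomial.C b * g = Polynomial.C (c * b) - Polynomial.C c * f) :
    ∀ n : ℕ, 1 ≤ n →
      seqA f g (Polynomial.C b) n = c * b ^ n →
      seqA f g (Polynomial.C b) (n - 1) ≠ c * b ^ (n - 1) →
      f.eval (n : ℤ) = 0 := by
  rintro n hn hn_eq hprev_ne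
  obtain ⟨m, rfl⟩ := Nat.exists_eq_add_of_le' hn
  have hstep := seqA_C_succ_sub_eq hb hpoly m
  rw [hn_eq, sub_self] at hstep
  rw [Nat.add_sub_cancel] at hprev_ne
  push_cast
  exact (mul_eq_zero.mp hstep.symm).resolve_right (sub_ne_zero.mpr hprev_ne)
end

section
/- Let f, g, h ∈ ℤ[X] with g·h ≡ 0 (the product is the zero polynomial), let (a_n)_{n∈ℕ} = a(f,g,h), and let b, c be integers with b·c ≠ 0 such that a_n = c·b^n for all sufficiently large n. Then f is the constant polynomial b, and a_n = g(0)·b^n for every n ∈ ℕ; in particular, the sequence is a geometric progression. -/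
open Polynomial

theorem stmt_10 (f g h : Polynomial ℤ) (hgh : g * h = 0) (b c : ℤ) (hbc : b * c ≠ 0)
    (hev : ∃ N : ℕ, ∀ n : ℕ, N ≤ n → seqA f g h n = c * b ^ n) :
    f = Polynomial.C b ∧ ∀ n : ℕ, seqA f g h n = g.eval 0 * b ^ n := by
  obtain ⟨N, hN⟩ := hev
  have hb : b ≠ 0 := left_ne_zero_of_mul hbc
  have hc : c ≠ 0 := right_ne_zero_of_mul hbc
  rcases mul_eq_zero.mp hgh with hg | hh
  · exfalso
    have hz : ∀ n, seqA f g h n = 0 := by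
      intro n
      induction n with
      | zero => simp [seqA, hg]
      | succ n ih => rw [seqA, ih, hg]; simp
    have h1 := hN N le_rfl
    rw [hz N] at h1
    exact (mul_ne_zero hc (pow_ne_zero _ hb)) h1.symm
  · have hroot : ∀ n : ℕ, N ≤ n → f.eval ((n : ℤ) + 1) = b := by
      intro n hn
      have h1 := hN n hn
      have h2 := hN (n + 1) (le_trans hn (Nat.le_succ n))
      have h3 : seqA f g h (n + 1) = f.eval ((n : ℤ) + 1) * seqA f g h n := by
        simp [seqA, hh]
      rw [h1, h2] at h3
      have hcb : c * b ^ n ≠ 0 := mul_ne_zero hc (pow_ne_zero _ hb)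
      have h4 : f.eval ((n : ℤ) + 1) * (c * b ^ n) = b * (c * b ^ n) := by
        rw [← h3]; ring
      exact mul_right_cancel₀ hcb h4
    have hf : f = Polynomial.C b := by
      have hsub : f - Polynomial.C b = 0 := by
        apply Polynomial.eq_zero_of_infinite_isRoot
        apply Set.Infinite.mono (s := Set.Ici ((N : ℤ) + 1))
        · intro x hx
          have hx' : (N : ℤ) + 1 ≤ x := hx
          have hn : N ≤ (x - 1).toNat := by omega
          have hcast : ((x - 1).toNat : ℤ) + 1 = x := by omega
          have := hroot ((x - 1).toNat) hn
          simp only [Set.mem_setOf_eq, Polynomial.IsRoot, Polynomial.eval_sub,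
            Polynomial.eval_C]
          rw [hcast] at this
          omega
        · exact Set.Ici_infinite _
      linear_combination (norm := ring_nf) hsub
    refine ⟨hf, ?_⟩
    intro n
    induction n with
    | zero => simp [seqA]
    | succ n ih =>
      rw [seqA, ih]
      simp [hf, hh]
      ring
end

section
/- Let b, c be integers with b·c ≠ 0, let f = b·(2 − X), g = c·(X − 1), let h be the constant polynomial b, and set (a_n)_{n∈ℕ} = a(f,g,h). Then every prime p that divides a_n for some n ∈ ℕ divides b·c; consequently the set P_a = {p prime : p ∣ a_n for some n ∈ ℕ} is finite. -/
open Polynomial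

lemma seq_closed (b c : ℤ) (n : ℕ) :
    seqA (C b * (2 - X)) (C c * (X - 1)) (C b) (n + 2) = c * b ^ (n + 2) := by
  induction n with
  | zero => simp [seqA]
  | succ k ih =>
    rw [show k + 1 + 2 = (k + 2) + 1 from rfl, seqA, ih]
    simp only [eval_mul, eval_C, eval_sub, eval_X, eval_ofNat, eval_one]
    push_cast
    ring

lemma seq_dvd (b c : ℤ) (n : ℕ) :
    seqA (C b * (2 - X)) (C c * (X - 1)) (C b) n ∣ c * b ^ (n + 1) := by
  match n with
  | 0 =>
    have h0 : seqA (C b * (2 - X)) (C c * (X - 1)) (C b) 0 = -c := by simp [seqA]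
    rw [h0]; exact ⟨-b, by ring⟩
  | 1 =>
    have h1 : seqA (C b * (2 - X)) (C c * (X - 1)) (C b) 1 = -(b * c) := by
      simp [seqA]
    rw [h1]; exact ⟨-b, by ring⟩
  | (m + 2) => rw [seq_closed]; exact ⟨b, by ring⟩

theorem stmt_12 (b c : ℤ) (hbc : b * c ≠ 0) :
    (∀ p : ℕ, p.Prime →
      (∃ n : ℕ, (p : ℤ) ∣ seqA (Polynomial.C b * (2 - Polynomial.X))
        (Polynomial.C c * (Polynomial.X - 1)) (Polynomial.C b) n) → (p : ℤ) ∣ b * c) ∧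
    {p : ℕ | p.Prime ∧ ∃ n : ℕ, (p : ℤ) ∣ seqA (Polynomial.C b * (2 - Polynomial.X))
        (Polynomial.C c * (Polynomial.X - 1)) (Polynomial.C b) n}.Finite := by
  have key : ∀ p : ℕ, p.Prime →
      (∃ n : ℕ, (p : ℤ) ∣ seqA (Polynomial.C b * (2 - Polynomial.X))
        (Polynomial.C c * (Polynomial.X - 1)) (Polynomial.C b) n) → (p : ℤ) ∣ b * c := by
    intro p hp ⟨n, hn⟩
    have hpz : Prime (p : ℤ) := Nat.prime_iff_prime_int.1 hp
    have : (p : ℤ) ∣ c * b ^ (n + 1) := hn.trans (seq_dvd b c n)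
    rcases hpz.dvd_mul.mp this with h | h
    · exact Dvd.dvd.mul_left h b
    · exact Dvd.dvd.mul_right (hpz.dvd_of_dvd_pow h) c
  refine ⟨key, ?_⟩
  apply Set.Finite.subset (Set.finite_Icc 1 (b * c).natAbs)
  rintro p ⟨hp, hn⟩
  have hdvd : (p : ℤ) ∣ b * c := key p hp hn
  have : p ∣ (b * c).natAbs := Int.natAbs_dvd_natAbs.mpr (by simpa using hdvd)
  exact ⟨hp.one_le, Nat.le_of_dvd (Int.natAbs_pos.mpr hbc) this⟩
end

section
/- Let f = 2 − X, g = X − 1, and let h be the constant polynomial 1, and set (a_n)_{n∈ℕ} = a(f,g,h). Then a_0 = a_1 = −1 and a_n = 1 for every n ≥ 2; in particular, |a_n| = 1 for all n, so the set P_a = {p prime : p ∣ a_n for some n ∈ ℕ} is empty, yet there exist no integers b, c with a_n = c·b^n for every n ∈ ℕ (the sequence is not a geometric progression). -/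
open Polynomial

lemma seqA_zero' : seqA (2 - Polynomial.X) (Polynomial.X - 1) 1 0 = -1 := by
  simp [seqA]

lemma seqA_one' : seqA (2 - Polynomial.X) (Polynomial.X - 1) 1 1 = -1 := by
  simp [seqA]

lemma seqA_ge_two : ∀ n : ℕ, 2 ≤ n → seqA (2 - Polynomial.X) (Polynomial.X - 1) 1 n = 1 := by
  intro n hn
  induction n with
  | zero => omega
  | succ m ih =>
    rcases Nat.lt_or_ge m 2 with hm | hm
    · interval_cases m
      · omega
      · show seqA _ _ _ 2 = 1
        simp [seqA]
    · have := ih hm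
      show seqA _ _ _ (m + 1) = 1
      rw [seqA, this]
      simp
      ring

theorem stmt_13 :
    seqA (2 - Polynomial.X) (Polynomial.X - 1) 1 0 = -1 ∧
    seqA (2 - Polynomial.X) (Polynomial.X - 1) 1 1 = -1 ∧
    (∀ n : ℕ, 2 ≤ n → seqA (2 - Polynomial.X) (Polynomial.X - 1) 1 n = 1) ∧
    (∀ n : ℕ, |seqA (2 - Polynomial.X) (Polynomial.X - 1) 1 n| = 1) ∧
    {p : ℕ | p.Prime ∧ ∃ n : ℕ,
      (p : ℤ) ∣ seqA (2 - Polynomial.X) (Polynomial.X - 1) 1 n} = ∅ ∧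
    ¬ ∃ b c : ℤ, ∀ n : ℕ, seqA (2 - Polynomial.X) (Polynomial.X - 1) 1 n = c * b ^ n := by
  have habs : ∀ n : ℕ, |seqA (2 - Polynomial.X) (Polynomial.X - 1) 1 n| = 1 := by
    intro n
    match n, Nat.lt_or_ge n 2 with
    | 0, _ => simp [seqA_zero']
    | 1, _ => simp [seqA_one']
    | (m+2), _ => simp [seqA_ge_two (m+2) (by omega)]
  refine ⟨seqA_zero', seqA_one', seqA_ge_two, habs, ?_, ?_⟩
  · ext p
    simp only [Set.mem_setOf_eq, Set.mem_empty_iff_false, iff_false, not_and]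
    rintro hp ⟨n, hdvd⟩
    have h1 : (p : ℤ) ∣ 1 := by
      have := habs n
      rcases abs_eq (by norm_num : (0:ℤ) ≤ 1) |>.mp this with h | h
      · rwa [h] at hdvd
      · rw [h] at hdvd
        exact (dvd_neg.mp hdvd)
    have := Int.le_of_dvd one_pos h1
    have := hp.two_le
    omega
  · rintro ⟨b, c, hbc⟩
    have h0 := hbc 0
    have h1 := hbc 1
    have h2 := hbc 2
    rw [seqA_zero'] at h0
    rw [seqA_one'] at h1
    rw [seqA_ge_two 2 le_rfl] at h2
    simp at h0
    subst h0
    have hb : b = 1 := by nlinarith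
    subst hb
    simp at h2
end

section
/- Let n₀ ∈ ℕ, let b', c' be integers, let P = ∏_{j=0}^{n₀−1}(X − j) ∈ ℤ[X], and define f = 2·b'·n₀! − 2·b'·P, g = −c'·n₀! + 2·c'·P, and h the constant polynomial b'·n₀!. Set (a_n)_{n∈ℕ} = a(f,g,h). Then a_n = (1 − 2^{n+1})·c'·(b')^n·(n₀!)^{n+1} for every n < n₀, and a_n = c'·(b')^n·(n₀!)^{n+1} for every n ≥ n₀; in particular, writing b = b'·n₀! and c = c'·n₀!, one has a_n = c·b^n if and only if n ≥ n₀ (provided b'·c' ≠ 0). -/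
open Polynomial

lemma prod_fact_aux (n : ℕ) : ∏ j ∈ Finset.range n, ((n : ℤ) - (j : ℤ)) = (n.factorial : ℤ) := by
  rw [← Finset.prod_range_reflect]
  have hc : ∀ j ∈ Finset.range n, ((n : ℤ) - ((n - 1 - j : ℕ) : ℤ)) = ((j : ℤ) + 1) := by
    intro j hj
    rw [Finset.mem_range] at hj
    have h1 : (n - 1 - j : ℕ) = n - (j + 1) := by omega
    rw [h1, Nat.cast_sub (by omega)]
    push_cast; ring
  rw [Finset.prod_congr rfl hc]
  have := Finset.prod_range_add_one_eq_factorial n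
  exact_mod_cast congrArg (Nat.cast : ℕ → ℤ) this

theorem stmt_14 (n₀ : ℕ) (b' c' : ℤ)
    (P : Polynomial ℤ) (hP : P = ∏ j ∈ Finset.range n₀, (Polynomial.X - Polynomial.C (j : ℤ)))
    (f g h : Polynomial ℤ)
    (hf : f = Polynomial.C (2 * b' * (n₀.factorial : ℤ)) - Polynomial.C (2 * b') * P)
    (hg : g = Polynomial.C (-c' * (n₀.factorial : ℤ)) + Polynomial.C (2 * c') * P)
    (hh : h = Polynomial.C (b' * (n₀.factorial : ℤ))) :
    (∀ n : ℕ, n < n₀ →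
      seqA f g h n = (1 - 2 ^ (n + 1)) * c' * b' ^ n * (n₀.factorial : ℤ) ^ (n + 1)) ∧
    (∀ n : ℕ, n₀ ≤ n →
      seqA f g h n = c' * b' ^ n * (n₀.factorial : ℤ) ^ (n + 1)) ∧
    (b' * c' ≠ 0 → ∀ n : ℕ,
      seqA f g h n = (c' * (n₀.factorial : ℤ)) * (b' * (n₀.factorial : ℤ)) ^ n ↔ n₀ ≤ n) := by
  have hfe : ∀ x : ℤ, f.eval x = 2 * b' * (n₀.factorial : ℤ) - 2 * b' * P.eval x := by
    intro x; simp [hf]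
  have hge : ∀ x : ℤ, g.eval x = -c' * (n₀.factorial : ℤ) + 2 * c' * P.eval x := by
    intro x; simp [hg]
  have hhe : ∀ x : ℤ, h.eval x = b' * (n₀.factorial : ℤ) := by
    intro x; simp [hh]
  have hPlt : ∀ n : ℕ, n < n₀ → P.eval (n : ℤ) = 0 := by
    intro n hn
    rw [hP, eval_prod]
    exact Finset.prod_eq_zero (Finset.mem_range.mpr hn) (by simp)
  have hPn0 : P.eval (n₀ : ℤ) = (n₀.factorial : ℤ) := by
    rw [hP, eval_prod]
    simpa using prod_fact_aux n₀
  -- main key lemma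
  have key : ∀ n : ℕ, seqA f g h n =
      if n < n₀ then (1 - 2 ^ (n + 1)) * c' * b' ^ n * (n₀.factorial : ℤ) ^ (n + 1)
      else c' * b' ^ n * (n₀.factorial : ℤ) ^ (n + 1) := by
    intro n
    induction n with
    | zero =>
      by_cases h0 : 0 < n₀
      · rw [if_pos h0]
        show g.eval 0 = _
        rw [hge]
        have := hPlt 0 h0
        push_cast at this
        rw [this]; ring
      · have hn0 : n₀ = 0 := by omega
        rw [if_neg (by omega)]
        show g.eval 0 = _
        rw [hge]
        have : P.eval ((0:ℕ) : ℤ) = (n₀.factorial : ℤ) := by rw [hn0] at hPn0 ⊢; exact_mod_cast hPn0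
        push_cast at this
        rw [this]; ring
    | succ n ih =>
      show f.eval ((n : ℤ) + 1) * seqA f g h n +
          g.eval ((n : ℤ) + 1) * (h.eval ((n : ℤ) + 1)) ^ (n + 1) = _
      have hcast : ((n : ℤ) + 1) = ((n + 1 : ℕ) : ℤ) := by push_cast; ring
      rw [hfe, hge, hhe]
      rcases lt_trichotomy (n + 1) n₀ with hlt | heq | hgt
      · rw [if_pos hlt]
        rw [if_pos (by omega)] at ih
        rw [ih, hcast, hPlt (n + 1) hlt]
        ring
      · rw [if_neg (by omega)]
        rw [if_pos (by omega)] at ih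
        rw [ih, hcast, show ((n + 1 : ℕ) : ℤ) = (n₀ : ℤ) from by exact_mod_cast heq, hPn0]
        ring
      · rw [if_neg (by omega)]
        rw [if_neg (by omega)] at ih
        rw [ih]
        ring
  refine ⟨fun n hn => by rw [key n, if_pos hn],
          fun n hn => by rw [key n, if_neg (by omega)], ?_⟩
  intro hbc n
  constructor
  · intro heq
    by_contra hlt
    push_neg at hlt
    rw [key n, if_pos hlt] at heq
    have hb : b' ≠ 0 := fun h => hbc (by rw [h]; ring)
    have hc : c' ≠ 0 := fun h => hbc (by rw [h]; ring)
    have hfac : (n₀.factorial : ℤ) ≠ 0 := by exact_mod_cast n₀.factorial_ne_zero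
    have hX : c' * b' ^ n * (n₀.factorial : ℤ) ^ (n + 1) ≠ 0 := by
      exact mul_ne_zero (mul_ne_zero hc (pow_ne_zero _ hb)) (pow_ne_zero _ hfac)
    have h2 : (1 - 2 ^ (n + 1)) * (c' * b' ^ n * (n₀.factorial : ℤ) ^ (n + 1)) =
        1 * (c' * b' ^ n * (n₀.factorial : ℤ) ^ (n + 1)) := by
      linear_combination heq
    have h3 : (1 : ℤ) - 2 ^ (n + 1) = 1 := mul_right_cancel₀ hX h2
    have : (2 : ℤ) ^ (n + 1) = 0 := by linarith
    exact pow_ne_zero (n + 1) (two_ne_zero) this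
  · intro hn
    rw [key n, if_neg (by omega)]
    ring
end
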